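/- arXiv:2309.12806 — 2 statements merged into one kernel-verified Lean document; each statement's English description precedes it below -/
import Mathlib

section
/- Let p < q be primes and α > 1 a real number. Suppose there exist nonnegative integers e, f, g, h such that 1 < p^f/q^e < α and 1 < q^h/p^g < α. Then every integer n of the form p^ℓ * q^k with n ≥ p^g * q^e has the property that the interval [n, nα) contains an integer of the form p^a * q^b with a, b ≥ 0. Specifically: if k ≥ e then p^{ℓ+f} * q^{k−e} ∈ [n, nα), and if ℓ ≥ g then p^{ℓ−g} * q^{k+h} ∈ [n, nα). -/
/-! Multiplying `n = p^ℓ q^k` by `p^f / q^e` (when `e ≤ k`) or by `q^h / p^g` (when `g ≤ ℓ`) keeps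
the exponents natural and scales `n` by a factor in `(1, α)`, so the product lies in `[n, nα)`.
Since `p^g q^e ≤ p^ℓ q^k`, the exponents cannot satisfy both `k < e` and `ℓ < g`. -/

theorem pow_add_mul_pow_sub {K : Type*} [Field K] (a b : K) (hb : b ≠ 0) {ℓ k e : ℕ} (f : ℕ)
    (he : e ≤ k) : a ^ (ℓ + f) * b ^ (k - e) = a ^ ℓ * b ^ k * (a ^ f / b ^ e) := by
  obtain ⟨d, rfl⟩ := Nat.exists_eq_add_of_le he
  rw [Nat.add_sub_cancel_left, pow_add, pow_add]
  field_simp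

theorem le_mul_pow_exchange_lt (p q : ℕ) (hp : p ≠ 0) (hq : q ≠ 0) {α : ℝ} {ℓ k e f : ℕ}
    (he : e ≤ k) (hr : 1 < (p : ℝ) ^ f / (q : ℝ) ^ e ∧ (p : ℝ) ^ f / (q : ℝ) ^ e < α) :
    ((p ^ ℓ * q ^ k : ℕ) : ℝ) ≤ ((p ^ (ℓ + f) * q ^ (k - e) : ℕ) : ℝ) ∧
      ((p ^ (ℓ + f) * q ^ (k - e) : ℕ) : ℝ) < ((p ^ ℓ * q ^ k : ℕ) : ℝ) * α := by
  have hn : (0 : ℝ) < ((p ^ ℓ * q ^ k : ℕ) : ℝ) := by positivity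
  push_cast at hn ⊢
  rw [pow_add_mul_pow_sub _ _ (by exact_mod_cast hq) f he]
  exact ⟨le_mul_of_one_le_right hn.le hr.1.le, mul_lt_mul_of_pos_left hr.2 hn⟩

theorem le_right_or_le_left_of_pow_mul_pow_le {p q : ℕ} (hp : 1 < p) (hq : 1 < q)
    {ℓ k g e : ℕ} (hn : p ^ g * q ^ e ≤ p ^ ℓ * q ^ k) : e ≤ k ∨ g ≤ ℓ := by
  by_contra! h
  exact (Nat.mul_lt_mul_of_lt_of_lt (Nat.pow_lt_pow_right hp h.2)
    (Nat.pow_lt_pow_right hq h.1)).not_ge hn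

theorem stmt_11_general (p q : ℕ) (hp : p.Prime) (hq : q.Prime)
    (α : ℝ) (e f g h : ℕ)
    (h1 : 1 < (p : ℝ) ^ f / (q : ℝ) ^ e ∧ (p : ℝ) ^ f / (q : ℝ) ^ e < α)
    (h2 : 1 < (q : ℝ) ^ h / (p : ℝ) ^ g ∧ (q : ℝ) ^ h / (p : ℝ) ^ g < α)
    (ℓ k : ℕ) (hn : p ^ g * q ^ e ≤ p ^ ℓ * q ^ k) :
    (e ≤ k →
      ((p ^ ℓ * q ^ k : ℕ) : ℝ) ≤ ((p ^ (ℓ + f) * q ^ (k - e) : ℕ) : ℝ) ∧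
        ((p ^ (ℓ + f) * q ^ (k - e) : ℕ) : ℝ) < ((p ^ ℓ * q ^ k : ℕ) : ℝ) * α) ∧
    (g ≤ ℓ →
      ((p ^ ℓ * q ^ k : ℕ) : ℝ) ≤ ((p ^ (ℓ - g) * q ^ (k + h) : ℕ) : ℝ) ∧
        ((p ^ (ℓ - g) * q ^ (k + h) : ℕ) : ℝ) < ((p ^ ℓ * q ^ k : ℕ) : ℝ) * α) ∧
    (∃ a b : ℕ, ((p ^ ℓ * q ^ k : ℕ) : ℝ) ≤ ((p ^ a * q ^ b : ℕ) : ℝ) ∧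
        ((p ^ a * q ^ b : ℕ) : ℝ) < ((p ^ ℓ * q ^ k : ℕ) : ℝ) * α) := by
  have trade_q : e ≤ k → _ := fun he =>
    le_mul_pow_exchange_lt p q hp.ne_zero hq.ne_zero (ℓ := ℓ) he h1
  have trade_p : g ≤ ℓ →
      ((p ^ ℓ * q ^ k : ℕ) : ℝ) ≤ ((p ^ (ℓ - g) * q ^ (k + h) : ℕ) : ℝ) ∧
        ((p ^ (ℓ - g) * q ^ (k + h) : ℕ) : ℝ) < ((p ^ ℓ * q ^ k : ℕ) : ℝ) * α := fun hg => by
    rw [mul_comm (p ^ ℓ), mul_comm (p ^ (ℓ - g))]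
    exact le_mul_pow_exchange_lt q p hq.ne_zero hp.ne_zero hg h2
  refine ⟨trade_q, trade_p, ?_⟩
  rcases le_right_or_le_left_of_pow_mul_pow_le hp.one_lt hq.one_lt hn with he | hg
  · exact ⟨_, _, trade_q he⟩
  · exact ⟨_, _, trade_p hg⟩

theorem stmt_11 (p q : ℕ) (hp : p.Prime) (hq : q.Prime) (hpq : p < q)
    (α : ℝ) (hα : 1 < α) (e f g h : ℕ)
    (h1 : 1 < (p : ℝ) ^ f / (q : ℝ) ^ e ∧ (p : ℝ) ^ f / (q : ℝ) ^ e < α)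
    (h2 : 1 < (q : ℝ) ^ h / (p : ℝ) ^ g ∧ (q : ℝ) ^ h / (p : ℝ) ^ g < α)
    (ℓ k : ℕ) (hn : p ^ g * q ^ e ≤ p ^ ℓ * q ^ k) :
    (e ≤ k →
      ((p ^ ℓ * q ^ k : ℕ) : ℝ) ≤ ((p ^ (ℓ + f) * q ^ (k - e) : ℕ) : ℝ) ∧
        ((p ^ (ℓ + f) * q ^ (k - e) : ℕ) : ℝ) < ((p ^ ℓ * q ^ k : ℕ) : ℝ) * α) ∧
    (g ≤ ℓ →
      ((p ^ ℓ * q ^ k : ℕ) : ℝ) ≤ ((p ^ (ℓ - g) * q ^ (k + h) : ℕ) : ℝ) ∧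
        ((p ^ (ℓ - g) * q ^ (k + h) : ℕ) : ℝ) < ((p ^ ℓ * q ^ k : ℕ) : ℝ) * α) ∧
    (∃ a b : ℕ, ((p ^ ℓ * q ^ k : ℕ) : ℝ) ≤ ((p ^ a * q ^ b : ℕ) : ℝ) ∧
        ((p ^ a * q ^ b : ℕ) : ℝ) < ((p ^ ℓ * q ^ k : ℕ) : ℝ) * α) :=
  stmt_11_general p q hp hq α e f g h h1 h2 ℓ k hn
end

section
/- Every interval [n, 3n/2) with integer n ≥ 1 contains an integer of the form 2^a · 3^b with a, b ≥ 0; that is, n_{2,3}(3/2) = 1. -/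
/-! Every number `2 ^ a * 3 ^ b ≥ 3` has a smaller such number within a factor `3 / 2` below it:
`2 / 3` of it if `b > 0`, and `3 / 4` of it if it is a power of two. So the least such number
that is at least `n` is below `3 n / 2`, since the next smaller one is below `n`. -/

lemma exists_two_pow_mul_three_pow_lt_of_three_le {a b : ℕ} (h : 3 ≤ 2 ^ a * 3 ^ b) :
    ∃ a' b', 2 ^ a' * 3 ^ b' < 2 ^ a * 3 ^ b ∧
      2 * (2 ^ a * 3 ^ b) ≤ 3 * (2 ^ a' * 3 ^ b') := by
  cases b with
  | zero =>
    obtain ⟨c, rfl⟩ : ∃ c, a = c + 2 := by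
      rcases a with _ | _ | c
      all_goals simp_all
    have : 0 < 2 ^ c := by positivity
    exact ⟨c, 1, by simp only [pow_succ, pow_zero]; omega, by simp only [pow_succ, pow_zero]; omega⟩
  | succ b =>
    have : 0 < 2 ^ a * 3 ^ b := by positivity
    refine ⟨a + 1, b, ?_, ?_⟩ <;> rw [pow_succ, pow_succ] <;> nlinarith

lemma exists_least_two_pow_mul_three_pow_ge (n : ℕ) :
    ∃ a b, n ≤ 2 ^ a * 3 ^ b ∧ ∀ a' b', 2 ^ a' * 3 ^ b' < 2 ^ a * 3 ^ b → 2 ^ a' * 3 ^ b' < n := by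
  classical
  have hex : ∃ m, n ≤ m ∧ ∃ a b, m = 2 ^ a * 3 ^ b :=
    ⟨2 ^ n, n.lt_two_pow_self.le, n, 0, by simp⟩
  obtain ⟨hle, a, b, hab⟩ := Nat.find_spec hex
  refine ⟨a, b, hab ▸ hle, fun a' b' hlt => ?_⟩
  by_contra! hge
  exact Nat.find_min hex (hab ▸ hlt) ⟨hge, a', b', rfl⟩

theorem stmt_17 :
    ∀ n : ℕ, 1 ≤ n → ∃ a b : ℕ, n ≤ 2 ^ a * 3 ^ b ∧ 2 * (2 ^ a * 3 ^ b) < 3 * n := by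
  intro n hn
  obtain ⟨a, b, hle, hmin⟩ := exists_least_two_pow_mul_three_pow_ge n
  refine ⟨a, b, hle, ?_⟩
  by_cases h3 : 3 ≤ 2 ^ a * 3 ^ b
  · obtain ⟨a', b', hlt, hgap⟩ := exists_two_pow_mul_three_pow_lt_of_three_le h3
    have := hmin a' b' hlt
    omega
  · have := hmin 0 0
    simp only [pow_zero, mul_one] at this
    omega
end
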